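/- Let U₁ = {(a,b) ∈ ([0,1/2)×[1/2,1)) ∪ ([1/2,1)×[0,1/2)) : a + b < 3/4}. If x, z ∈ U₁ and y* = (x+z)/2 is their midpoint, then (1-{x₁})² + (1-{z₁})² - 2(1-{y*₁})² ≥ 2((z₁-x₁)/2)², where {·} denotes the map [0,1) → [0,1/2) with {t} = t for t < 1/2 and {t} = t - 1/2 otherwise. -/
import Mathlib


/-- The nonstandard fractional map `{·} : [0,1) → [0,1/2)`. -/
noncomputable def br (t : ℝ) : ℝ := if t < 1/2 then t else t - 1/2

/-- The set `U₁` from Definition 3.5 of the paper. -/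
def U1 : Set (ℝ × ℝ) :=
  {v | (v ∈ Set.Ico (0:ℝ) (1/2) ×ˢ Set.Ico (1/2:ℝ) 1 ∪
        Set.Ico (1/2:ℝ) 1 ×ˢ Set.Ico (0:ℝ) (1/2)) ∧ v.1 + v.2 < 3/4}

lemma U1_fst {v : ℝ × ℝ} (hv : v ∈ U1) :
    (0 ≤ v.1 ∧ v.1 < 1/4) ∨ (1/2 ≤ v.1 ∧ v.1 < 3/4) := by
  obtain ⟨h1 | h1, h2⟩ := hv
  · left; exact ⟨h1.1.1, by have := h1.2.1; linarith⟩
  · right; exact ⟨h1.1.1, by have := h1.2.1; linarith⟩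

theorem U1_good (x z ystar : ℝ × ℝ) (hx : x ∈ U1) (hz : z ∈ U1)
    (hmid : ystar = (1/2 : ℝ) • (x + z)) :
    (1 - br x.1)^2 + (1 - br z.1)^2 - 2 * (1 - br ystar.1)^2 ≥ 2 * ((z.1 - x.1)/2)^2 := by
  have hy : ystar.1 = (x.1 + z.1) / 2 := by rw [hmid]; simp; ring
  have hxf := U1_fst hx
  have hzf := U1_fst hz
  unfold br
  rw [hy]
  rcases hxf with ⟨hx0, hx1⟩ | ⟨hx0, hx1⟩ <;> rcases hzf with ⟨hz0, hz1⟩ | ⟨hz0, hz1⟩ <;>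
    [(rw [if_pos (by linarith), if_pos (by linarith), if_pos (by linarith)]);
     (rw [if_pos (by linarith), if_neg (by linarith), if_pos (by linarith)]);
     (rw [if_neg (by linarith), if_pos (by linarith), if_pos (by linarith)]);
     (rw [if_neg (by linarith), if_neg (by linarith), if_neg (by linarith)])] <;> nlinarith
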